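/- arXiv:2409.10438 — 2 statements merged into one kernel-verified Lean document; each statement's English description precedes it below -/
import Mathlib

section
/- Let C be an additive idempotent complete category. If F is a finitely presented contravariant functor on C, then F is projective in mod C if and only if a transpose Tr F is projective in mod C^op. -/
open CategoryTheory CategoryTheory.Limits Opposite

namespace Paper


variable {C : Type*} [Category C] [Preadditive C]

/-- Exactness of the sequence of contravariant representable functors at interior position `i`. -/
def YExactAt {m : ℕ} (T : ComposableArrows C m) (i : ℕ) (h : i + 2 ≤ m) : Prop :=
  T.map' i (i+1) (by omega) (by omega) ≫ T.map' (i+1) (i+2) (by omega) h = 0 ∧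
  ∀ (W : C) (u : W ⟶ T.obj' (i+1) (by omega)),
    u ≫ T.map' (i+1) (i+2) (by omega) h = 0 →
      ∃ v : W ⟶ T.obj' i (by omega), v ≫ T.map' i (i+1) (by omega) (by omega) = u

/-- Exactness of the sequence of covariant representable functors at interior position `i`. -/
def CoYExactAt {m : ℕ} (T : ComposableArrows C m) (i : ℕ) (h : i + 2 ≤ m) : Prop :=
  T.map' i (i+1) (by omega) (by omega) ≫ T.map' (i+1) (i+2) (by omega) h = 0 ∧
  ∀ (W : C) (u : T.obj' (i+1) (by omega) ⟶ W),
    T.map' i (i+1) (by omega) (by omega) ≫ u = 0 →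
      ∃ v : T.obj' (i+2) h ⟶ W, T.map' (i+1) (i+2) (by omega) h ≫ v = u

/-- `T = [X_n → ⋯ → X_1 → X → Y]` is such that `X_n → ⋯ → X` is an `n`-kernel of the
last map `X ⟶ Y`, i.e. `0 → C(-,X_n) → ⋯ → C(-,X) → C(-,Y)` is exact. -/
def IsNKernelSeq (n : ℕ) (T : ComposableArrows C (n+1)) : Prop :=
  Mono (T.map' 0 1 (by omega) (by omega)) ∧ ∀ (i : ℕ) (h : i + 2 ≤ n + 1), YExactAt T i h

/-- `T = [X → Y → Y_1 → ⋯ → Y_n]` is such that `Y → ⋯ → Y_n` is an `n`-cokernel of the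
first map `X ⟶ Y`, i.e. `0 → C(Y_n,-) → ⋯ → C(Y,-) → C(X,-)` is exact. -/
def IsNCokernelSeq (n : ℕ) (T : ComposableArrows C (n+1)) : Prop :=
  Epi (T.map' n (n+1) (by omega) (by omega)) ∧ ∀ (i : ℕ) (h : i + 2 ≤ n + 1), CoYExactAt T i h

/-- `T` is an `n`-exact sequence. -/
def IsNExactSeq (n : ℕ) (T : ComposableArrows C (n+1)) : Prop :=
  IsNKernelSeq n T ∧ IsNCokernelSeq n T

/-- The category `C` has `n`-kernels. -/
def HasNKernels (C : Type*) [Category C] [Preadditive C] (n : ℕ) : Prop :=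
  ∀ ⦃X Y : C⦄ (f : X ⟶ Y), ∃ (T : ComposableArrows C (n+1))
    (hX : T.obj' n (by omega) = X) (hY : T.obj' (n+1) (by omega) = Y),
      T.map' n (n+1) (by omega) (by omega) = eqToHom hX ≫ f ≫ eqToHom hY.symm ∧
      IsNKernelSeq n T

/-- The category `C` has `n`-cokernels. -/
def HasNCokernels (C : Type*) [Category C] [Preadditive C] (n : ℕ) : Prop :=
  ∀ ⦃X Y : C⦄ (f : X ⟶ Y), ∃ (T : ComposableArrows C (n+1))
    (hX : T.obj' 0 (by omega) = X) (hY : T.obj' 1 (by omega) = Y),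
      T.map' 0 1 (by omega) (by omega) = eqToHom hX ≫ f ≫ eqToHom hY.symm ∧
      IsNCokernelSeq n T

/-- Axiom (A2): every monomorphism, together with any of its `n`-cokernels, forms an
`n`-exact sequence. -/
def AxiomA2 (C : Type*) [Category C] [Preadditive C] (n : ℕ) : Prop :=
  ∀ (T : ComposableArrows C (n+1)), Mono (T.map' 0 1 (by omega) (by omega)) →
    IsNCokernelSeq n T → IsNExactSeq n T

/-- Axiom (A2ᵒᵖ): every epimorphism, together with any of its `n`-kernels, forms an
`n`-exact sequence. -/
def AxiomA2op (C : Type*) [Category C] [Preadditive C] (n : ℕ) : Prop :=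
  ∀ (T : ComposableArrows C (n+1)), Epi (T.map' n (n+1) (by omega) (by omega)) →
    IsNKernelSeq n T → IsNExactSeq n T

/-- Jasso's axioms for an `n`-abelian category. -/
def IsNAbelian (C : Type*) [Category C] [Preadditive C] (n : ℕ) : Prop :=
  HasNKernels C n ∧ HasNCokernels C n ∧ AxiomA2 C n ∧ AxiomA2op C n

/-- `C` has weak kernels. -/
def HasWeakKernelsP (C : Type*) [Category C] [Preadditive C] : Prop :=
  ∀ ⦃Y Z : C⦄ (g : Y ⟶ Z), ∃ (X : C) (f : X ⟶ Y), f ≫ g = 0 ∧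
    ∀ ⦃W : C⦄ (u : W ⟶ Y), u ≫ g = 0 → ∃ v : W ⟶ X, v ≫ f = u

/-- `C` has weak cokernels. -/
def HasWeakCokernelsP (C : Type*) [Category C] [Preadditive C] : Prop :=
  ∀ ⦃X Y : C⦄ (f : X ⟶ Y), ∃ (Z : C) (g : Y ⟶ Z), f ≫ g = 0 ∧
    ∀ ⦃W : C⦄ (u : Y ⟶ W), f ≫ u = 0 → ∃ v : Z ⟶ W, g ≫ v = u

/-- A category is von Neumann regular if every morphism factors as a split epimorphism
followed by a split monomorphism. -/
def VonNeumannRegular (C : Type*) [Category C] : Prop :=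
  ∀ ⦃X Y : C⦄ (f : X ⟶ Y), ∃ (W : C) (p : X ⟶ W) (j : W ⟶ Y),
    IsSplitEpi p ∧ IsSplitMono j ∧ p ≫ j = f


universe u

variable (C : Type u) [Category.{u} C] [Preadditive C]

/-- The ambient category of contravariant additive-group-valued functors on `C`,
in which `mod C` lives. -/
abbrev AmbC := Cᵒᵖ ⥤ AddCommGrpCat.{u}

/-- The ambient category of covariant additive-group-valued functors on `C`,
in which `mod Cᵒᵖ` lives. -/
abbrev AmbOp := C ⥤ AddCommGrpCat.{u}

variable {C}

/-- `p : B ⟶ Q` is a cokernel of `d : A ⟶ B` (universal property). -/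
def IsCokernelπ {D : Type*} [Category D] [Limits.HasZeroMorphisms D]
    {A B Q : D} (d : A ⟶ B) (p : B ⟶ Q) : Prop :=
  d ≫ p = 0 ∧ ∀ ⦃T : D⦄ (q : B ⟶ T), d ≫ q = 0 → ∃! t : Q ⟶ T, p ≫ t = q

/-- A contravariant functor is finitely presented if it is a cokernel of a morphism
between representable functors. -/
def IsFinitelyPresented (F : AmbC C) : Prop :=
  ∃ (X Y : C) (f : X ⟶ Y) (p : preadditiveYoneda.obj Y ⟶ F),
    IsCokernelπ (preadditiveYoneda.map f) p

/-- A covariant functor is finitely presented if it is a cokernel of a morphism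
between corepresentable functors. -/
def IsFinitelyPresentedOp (G : AmbOp C) : Prop :=
  ∃ (X Y : C) (f : X ⟶ Y) (q : preadditiveCoyoneda.obj (op X) ⟶ G),
    IsCokernelπ (preadditiveCoyoneda.map f.op) q

variable (C)

/-- The category `mod C` of finitely presented contravariant functors. -/
def ModC := ObjectProperty.FullSubcategory (IsFinitelyPresented (C := C))

instance : Category (ModC C) := ObjectProperty.FullSubcategory.category _

/-- The category `mod Cᵒᵖ` of finitely presented covariant functors. -/
def ModOp := ObjectProperty.FullSubcategory (IsFinitelyPresentedOp (C := C))

instance : Category (ModOp C) := ObjectProperty.FullSubcategory.category _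

variable {C}

/-- A finitely generated projective object of `mod C`: a direct summand of a
representable functor. -/
def IsFGProj (P : AmbC C) : Prop :=
  ∃ (X : C) (s : P ⟶ preadditiveYoneda.obj X) (r : preadditiveYoneda.obj X ⟶ P),
    s ≫ r = 𝟙 P

/-- A finitely generated projective object of `mod Cᵒᵖ`: a direct summand of a
corepresentable functor. -/
def IsFGProjOp (P : AmbOp C) : Prop :=
  ∃ (X : C) (s : P ⟶ preadditiveCoyoneda.obj (op X))
    (r : preadditiveCoyoneda.obj (op X) ⟶ P), s ≫ r = 𝟙 P

/-- `pdim F ≤ d` in `mod C`: there is an exact sequence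
`0 → P_d → ⋯ → P_0 → F → 0` with all `P_i` finitely generated projective. -/
def PdimLE (F : AmbC C) (d : ℕ) : Prop :=
  ∃ T : ComposableArrows (AmbC C) (d+1), T.obj' (d+1) (by omega) = F ∧
    (∀ (i : ℕ) (hi : i ≤ d), IsFGProj (T.obj' i (by omega))) ∧
    T.Exact ∧ Mono (T.map' 0 1 (by omega) (by omega)) ∧
    Epi (T.map' d (d+1) (by omega) (by omega))

/-- `pdim G ≤ d` in `mod Cᵒᵖ`. -/
def PdimOpLE (G : AmbOp C) (d : ℕ) : Prop :=
  ∃ T : ComposableArrows (AmbOp C) (d+1), T.obj' (d+1) (by omega) = G ∧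
    (∀ (i : ℕ) (hi : i ≤ d), IsFGProjOp (T.obj' i (by omega))) ∧
    T.Exact ∧ Mono (T.map' 0 1 (by omega) (by omega)) ∧
    Epi (T.map' d (d+1) (by omega) (by omega))

variable (C)

/-- `gldim (mod C) ≤ d`. -/
def GldimLE (d : ℕ) : Prop :=
  ∀ F : AmbC C, IsFinitelyPresented F → PdimLE F d

/-- `gldim (mod Cᵒᵖ) ≤ d`. -/
def GldimOpLE (d : ℕ) : Prop :=
  ∀ G : AmbOp C, IsFinitelyPresentedOp G → PdimOpLE G d

variable {C}

/-- `G ∈ mod Cᵒᵖ` is a transpose of `F ∈ mod C`: for some morphism `f : X ⟶ Y` of `C`,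
`F` is the cokernel of `C(-,f)` and `G` is the cokernel of `C(f,-)`. -/
def IsTransposeOf (G : AmbOp C) (F : AmbC C) : Prop :=
  ∃ (X Y : C) (f : X ⟶ Y) (p : preadditiveYoneda.obj Y ⟶ F)
    (q : preadditiveCoyoneda.obj (op X) ⟶ G),
      IsCokernelπ (preadditiveYoneda.map f) p ∧
      IsCokernelπ (preadditiveCoyoneda.map f.op) q

/-- The homology of `Hom(P'',H) → Hom(P,H) → Hom(P',H)` (obtained by applying `Hom(-,H)`
to `P' ⟶ P ⟶ P''`) vanishes. -/
def ExtVanishesAt {D : Type*} [Category D] [Preadditive D] {P' P P'' : D}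
    (d1 : P' ⟶ P) (d0 : P ⟶ P'') (H : D) : Prop :=
  ∀ φ : P ⟶ H, d1 ≫ φ = 0 → ∃ ψ : P'' ⟶ H, d0 ≫ ψ = φ

/-- A partial projective resolution `P_{m} → ⋯ → P_0 → G` in `mod Cᵒᵖ`. -/
def IsPartialProjResolutionOp {m : ℕ} (R : ComposableArrows (AmbOp C) (m+1))
    (G : AmbOp C) : Prop :=
  R.obj' (m+1) (by omega) = G ∧
  (∀ (j : ℕ) (hj : j ≤ m), IsFGProjOp (R.obj' j (by omega))) ∧
  R.Exact ∧ Epi (R.map' m (m+1) (by omega) (by omega))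

/-- A partial projective resolution `P_{m} → ⋯ → P_0 → F` in `mod C`. -/
def IsPartialProjResolutionC {m : ℕ} (R : ComposableArrows (AmbC C) (m+1))
    (F : AmbC C) : Prop :=
  R.obj' (m+1) (by omega) = F ∧
  (∀ (j : ℕ) (hj : j ≤ m), IsFGProj (R.obj' j (by omega))) ∧
  R.Exact ∧ Epi (R.map' m (m+1) (by omega) (by omega))

/-- `F ∈ mod C` is `k`-torsion free: `Ext^i(Tr F, C(X,-)) = 0` for all `1 ≤ i ≤ k` and
all `X ∈ C`, the `Ext` groups being computed from a projective resolution of a transpose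
`Tr F` in `mod Cᵒᵖ`. -/
def IsTorsionFree (F : AmbC C) (k : ℕ) : Prop :=
  ∃ G : AmbOp C, IsTransposeOf G F ∧
    ∀ i : ℕ, 1 ≤ i → i ≤ k →
      ∃ R : ComposableArrows (AmbOp C) (i+2), IsPartialProjResolutionOp R G ∧
        ∀ X : C, ExtVanishesAt (R.map' 0 1 (by omega) (by omega))
          (R.map' 1 2 (by omega) (by omega)) (preadditiveCoyoneda.obj (op X))

/-- `G ∈ mod Cᵒᵖ` is `k`-torsion free: `Ext^i(Tr G, C(-,X)) = 0` for all `1 ≤ i ≤ k` and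
all `X ∈ C`. -/
def IsTorsionFreeOp (G : AmbOp C) (k : ℕ) : Prop :=
  ∃ F : AmbC C, IsTransposeOf G F ∧
    ∀ i : ℕ, 1 ≤ i → i ≤ k →
      ∃ R : ComposableArrows (AmbC C) (i+2), IsPartialProjResolutionC R F ∧
        ∀ X : C, ExtVanishesAt (R.map' 0 1 (by omega) (by omega))
          (R.map' 1 2 (by omega) (by omega)) (preadditiveYoneda.obj X)

end Paper

open Paper

/-! Both `F = coker C(-,f)` and `Tr F = coker C(f,-)` are projective exactly when `f` is von
Neumann regular, i.e. `f ≫ g ≫ f = f` for some `g`. If so, `1 - g ≫ f` kills `f`, so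
`C(-, 1 - g ≫ f)` factors through `C(-,Y) ⟶ F` and yields a section of it. Conversely a retraction
of `F` onto a representable lifts to a section `s` of `C(-,Y) ⟶ F`; then `p ≫ s = C(-,h)` with
`f ≫ h = 0`, and `1 - h` lies in the kernel of `p`, hence equals `g ≫ f`, giving
`f ≫ g ≫ f = f ≫ (1 - h) = f`. The argument only uses that the Yoneda embedding is fully
faithful and additive, so it applies verbatim to the covariant side. -/

namespace Paper

universe v w

def IsVonNeumannRegularHom {C : Type*} [Category C] {X Y : C} (f : X ⟶ Y) : Prop :=
  ∃ g : Y ⟶ X, f ≫ g ≫ f = f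

lemma isVonNeumannRegularHom_op_iff {C : Type*} [Category C] {X Y : C} (f : X ⟶ Y) :
    IsVonNeumannRegularHom f.op ↔ IsVonNeumannRegularHom f :=
  ⟨fun ⟨g, hg⟩ => ⟨g.unop, Quiver.Hom.op_inj (by simpa using hg)⟩,
    fun ⟨g, hg⟩ => ⟨g.op, Quiver.Hom.unop_inj (by simpa using hg)⟩⟩

section IsCokernelπ

lemma IsCokernelπ.epi {D : Type*} [Category D] [HasZeroMorphisms D] {A B Q : D}
    {d : A ⟶ B} {p : B ⟶ Q} (h : IsCokernelπ d p) : Epi p where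
  left_cancellation a b hab := by
    obtain ⟨t, -, ht⟩ := h.2 (p ≫ a) (by rw [← Category.assoc, h.1, zero_comp])
    rw [ht a rfl, ht b hab.symm]

variable {J : Type w} [Category.{w} J] {A B Q : J ⥤ AddCommGrpCat.{w}} {d : A ⟶ B} {p : B ⟶ Q}

lemma IsCokernelπ.exists_app_eq (h : IsCokernelπ d p) (j : J) (x : B.obj j)
    (hx : p.app j x = 0) : ∃ a : A.obj j, d.app j a = x := by
  have hcolim : IsColimit (CokernelCofork.ofπ p h.1) :=
    CokernelCofork.IsColimit.ofπ p h.1 (fun q hq => (h.2 q hq).choose)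
      (fun q hq => (h.2 q hq).choose_spec.1) (fun q hq m hm => (h.2 q hq).choose_spec.2 m hm)
  have hexact := ((ShortComplex.mk d p h.1).exact_of_g_is_cokernel hcolim).map
    ((evaluation J AddCommGrpCat.{w}).obj j)
  exact (ShortComplex.ab_exact_iff _).1 hexact x hx

lemma IsCokernelπ.app_surjective (h : IsCokernelπ d p) (j : J) :
    Function.Surjective (p.app j) := by
  have := h.epi
  exact (AddCommGrpCat.epi_iff_surjective _).1 inferInstance

end IsCokernelπ

section Additivity
variable {C : Type w} [Category.{v} C] [Preadditive C]

instance : (preadditiveYoneda : C ⥤ Cᵒᵖ ⥤ AddCommGrpCat).Additive where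
  map_add {_ _ f g} := by ext; exact Preadditive.comp_add _ _ _ _ _ _

instance : (preadditiveCoyoneda : Cᵒᵖ ⥤ C ⥤ AddCommGrpCat).Additive where
  map_add {_ _ f g} := by ext; exact Preadditive.add_comp _ _ _ _ _ _

end Additivity

section Retract

variable {C A : Type*} [Category C] [Preadditive C] [Category A] [Preadditive A]
  (y : C ⥤ A) [y.Additive]
  {X Y : C} {f : X ⟶ Y} {F : A} {p : y.obj Y ⟶ F}

lemma exists_retract_of_isVonNeumannRegularHom (hp : IsCokernelπ (y.map f) p)
    (hf : IsVonNeumannRegularHom f) :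
    ∃ (s : F ⟶ y.obj Y) (r : y.obj Y ⟶ F), s ≫ r = 𝟙 F := by
  obtain ⟨g, hg⟩ := hf
  have := hp.epi
  obtain ⟨s, hs, -⟩ := hp.2 (y.map (𝟙 Y - g ≫ f)) (by
    rw [← y.map_comp, Preadditive.comp_sub, Category.comp_id, hg, sub_self, y.map_zero])
  refine ⟨s, p, (cancel_epi p).1 ?_⟩
  rw [← Category.assoc, hs, Category.comp_id, y.map_sub, y.map_id, Preadditive.sub_comp,
    y.map_comp, Category.assoc, hp.1, comp_zero, sub_zero, Category.id_comp]

lemma isVonNeumannRegularHom_of_retract [y.Full] [y.Faithful] (hp : IsCokernelπ (y.map f) p)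
    (hlift : ∀ (Z : C) (r : y.obj Z ⟶ F), ∃ a : Z ⟶ Y, y.map a ≫ p = r)
    (hexact : ∀ c : Y ⟶ Y, y.map c ≫ p = 0 → ∃ b : Y ⟶ X, b ≫ f = c)
    {Z : C} (s : F ⟶ y.obj Z) (r : y.obj Z ⟶ F) (hsr : s ≫ r = 𝟙 F) :
    IsVonNeumannRegularHom f := by
  obtain ⟨a, rfl⟩ := hlift Z r
  set h : Y ⟶ Y := y.preimage (p ≫ s ≫ y.map a) with h_def
  have hsection : (s ≫ y.map a) ≫ p = 𝟙 F := by rw [Category.assoc, hsr]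
  have hfh : f ≫ h = 0 := y.map_injective (by
    rw [y.map_comp, h_def, y.map_preimage, ← Category.assoc, hp.1, zero_comp, y.map_zero])
  obtain ⟨g, hg⟩ := hexact (𝟙 Y - h) (by
    rw [y.map_sub, y.map_id, Preadditive.sub_comp, h_def, y.map_preimage, Category.assoc,
      hsection, Category.id_comp, Category.comp_id, sub_self])
  exact ⟨g, by rw [← Category.assoc, Category.assoc f, hg, Preadditive.comp_sub,
    Category.comp_id, hfh, sub_zero]⟩

end Retract

section Representable

variable {C : Type u} [Category.{u} C] [Preadditive C] {X Y : C}

lemma preadditiveYoneda_hom_ext {Z : C} {F : AmbC C} {r t : preadditiveYoneda.obj Z ⟶ F}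
    (h : r.app (op Z) (𝟙 Z) = t.app (op Z) (𝟙 Z)) : r = t := by
  ext W (g : unop W ⟶ Z)
  have hg : (preadditiveYoneda.obj Z).map g.op (𝟙 Z) = g := Category.comp_id g
  rw [← hg]
  exact (NatTrans.naturality_apply r g.op _).trans
    ((congrArg (F.map g.op) h).trans (NatTrans.naturality_apply t g.op _).symm)

lemma preadditiveCoyoneda_hom_ext {Z : C} {G : AmbOp C}
    {r t : preadditiveCoyoneda.obj (op Z) ⟶ G} (h : r.app Z (𝟙 Z) = t.app Z (𝟙 Z)) :
    r = t := by
  ext W (g : Z ⟶ W)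
  have hg : (preadditiveCoyoneda.obj (op Z)).map g (𝟙 Z) = g := Category.id_comp g
  rw [← hg]
  exact (NatTrans.naturality_apply r g _).trans
    ((congrArg (G.map g) h).trans (NatTrans.naturality_apply t g _).symm)

variable {f : X ⟶ Y}

lemma IsCokernelπ.exists_preadditiveYoneda_map_comp_eq {F : AmbC C}
    {p : preadditiveYoneda.obj Y ⟶ F} (hp : IsCokernelπ (preadditiveYoneda.map f) p) (Z : C)
    (r : preadditiveYoneda.obj Z ⟶ F) : ∃ a : Z ⟶ Y, preadditiveYoneda.map a ≫ p = r := by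
  obtain ⟨a, ha⟩ := hp.app_surjective (op Z) (r.app (op Z) (𝟙 Z))
  refine ⟨a, preadditiveYoneda_hom_ext ?_⟩
  have h1 : (preadditiveYoneda.map a).app (op Z) (𝟙 Z) = a := Category.id_comp a
  exact (congrArg (p.app (op Z)) h1).trans ha

lemma IsCokernelπ.exists_comp_eq_of_preadditiveYoneda {F : AmbC C}
    {p : preadditiveYoneda.obj Y ⟶ F} (hp : IsCokernelπ (preadditiveYoneda.map f) p) {Z : C}
    (c : Z ⟶ Y) (hc : preadditiveYoneda.map c ≫ p = 0) : ∃ b : Z ⟶ X, b ≫ f = c := by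
  have h1 : (preadditiveYoneda.map c).app (op Z) (𝟙 Z) = c := Category.id_comp c
  exact hp.exists_app_eq (op Z) c
    ((congrArg (p.app (op Z)) h1).symm.trans (congrArg (fun φ => φ.app (op Z) (𝟙 Z)) hc))

lemma IsCokernelπ.exists_preadditiveCoyoneda_map_comp_eq {G : AmbOp C}
    {q : preadditiveCoyoneda.obj (op X) ⟶ G} (hq : IsCokernelπ (preadditiveCoyoneda.map f.op) q)
    (Z : Cᵒᵖ) (r : preadditiveCoyoneda.obj Z ⟶ G) :
    ∃ a : Z ⟶ op X, preadditiveCoyoneda.map a ≫ q = r := by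
  obtain ⟨Z⟩ := Z
  obtain ⟨a, ha⟩ := hq.app_surjective Z (r.app Z (𝟙 Z))
  refine ⟨a.op, preadditiveCoyoneda_hom_ext ?_⟩
  have h1 : (preadditiveCoyoneda.map a.op).app Z (𝟙 Z) = a := Category.comp_id a
  exact (congrArg (q.app Z) h1).trans ha

lemma IsCokernelπ.exists_comp_eq_of_preadditiveCoyoneda {G : AmbOp C}
    {q : preadditiveCoyoneda.obj (op X) ⟶ G} (hq : IsCokernelπ (preadditiveCoyoneda.map f.op) q)
    {Z : Cᵒᵖ} (c : Z ⟶ op X) (hc : preadditiveCoyoneda.map c ≫ q = 0) :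
    ∃ b : Z ⟶ op Y, b ≫ f.op = c := by
  obtain ⟨Z⟩ := Z
  have h1 : (preadditiveCoyoneda.map c).app Z (𝟙 Z) = c.unop := Category.comp_id c.unop
  obtain ⟨b, hb⟩ := hq.exists_app_eq Z c.unop
    ((congrArg (q.app Z) h1).symm.trans (congrArg (fun φ => φ.app Z (𝟙 Z)) hc))
  exact ⟨b.op, Quiver.Hom.unop_inj hb⟩

end Representable

lemma isFGProj_iff_isVonNeumannRegularHom {C : Type u} [Category.{u} C] [Preadditive C]
    {X Y : C} {f : X ⟶ Y} {F : AmbC C} {p : preadditiveYoneda.obj Y ⟶ F}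
    (hp : IsCokernelπ (preadditiveYoneda.map f) p) :
    IsFGProj F ↔ IsVonNeumannRegularHom f :=
  ⟨fun ⟨_, s, r, hsr⟩ => isVonNeumannRegularHom_of_retract preadditiveYoneda hp
      hp.exists_preadditiveYoneda_map_comp_eq hp.exists_comp_eq_of_preadditiveYoneda
      s r hsr,
    fun hf => ⟨Y, exists_retract_of_isVonNeumannRegularHom preadditiveYoneda hp hf⟩⟩

lemma isFGProjOp_iff_isVonNeumannRegularHom {C : Type u} [Category.{u} C] [Preadditive C]
    {X Y : C} {f : X ⟶ Y} {G : AmbOp C} {q : preadditiveCoyoneda.obj (op X) ⟶ G}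
    (hq : IsCokernelπ (preadditiveCoyoneda.map f.op) q) :
    IsFGProjOp G ↔ IsVonNeumannRegularHom f := by
  rw [← isVonNeumannRegularHom_op_iff]
  exact ⟨fun ⟨_, s, r, hsr⟩ => isVonNeumannRegularHom_of_retract preadditiveCoyoneda hq
      hq.exists_preadditiveCoyoneda_map_comp_eq
      hq.exists_comp_eq_of_preadditiveCoyoneda s r hsr,
    fun hf => ⟨X, exists_retract_of_isVonNeumannRegularHom preadditiveCoyoneda hq hf⟩⟩

end Paper

theorem stmt_11_general {C : Type u} [Category.{u} C] [Preadditive C]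
    (F : AmbC C) (G : AmbOp C) (hG : IsTransposeOf G F) :
    IsFGProj F ↔ IsFGProjOp G := by
  obtain ⟨X, Y, f, p, q, hp, hq⟩ := hG
  rw [isFGProj_iff_isVonNeumannRegularHom hp, isFGProjOp_iff_isVonNeumannRegularHom hq]

/-- A finitely presented functor `F` is projective in `mod C` iff a transpose `Tr F` is
projective in `mod Cᵒᵖ`. -/
theorem stmt_11 {C : Type u} [Category.{u} C] [Preadditive C] [HasZeroObject C]
    [HasFiniteBiproducts C] [IsIdempotentComplete C]
    (F : AmbC C) (hF : IsFinitelyPresented F) (G : AmbOp C) (hG : IsTransposeOf G F) :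
    IsFGProj F ↔ IsFGProjOp G :=
  stmt_11_general F G hG
end

section
/- Let C be an additive idempotent complete category. If C is m-abelian and n-abelian for two distinct positive integers m and n, then C is von Neumann regular; conversely, a von Neumann regular category is n-abelian for every positive integer n. -/
open CategoryTheory CategoryTheory.Limits

open Paper

/-!
Call `f` von Neumann regular if `f ≫ g ≫ f = f` for some `g`. With split idempotents this means
that `f` is a split epimorphism followed by a split monomorphism, and a regular `f` has a split
weak kernel and a split weak cokernel, split off `𝟙 - f ≫ g` and `𝟙 - g ≫ f`. If `g` is a weak
cokernel of `f`, regularity passes from `f` to `g`, and from `g` back to `f` once all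
epimorphisms split.

For `k < n`, a `k`-kernel of an epimorphism `f`, padded by zero objects, is an `n`-kernel, hence
`n`-exact by (A2ᵒᵖ); regularity runs from its first map `0 ⟶ 0` forward to `f`, so `f` splits.
Then regularity runs backward along a `k`-cokernel of any morphism, from its last map (an
epimorphism) to the morphism itself.

Conversely, if every morphism is regular, weak cokernels are weak kernels and vice versa, giving
(A2) and (A2ᵒᵖ), and kernels and cokernels padded by zeros give `n`-kernels and `n`-cokernels.
-/

namespace Paper

section Regular

variable {C : Type*} [Category C] {X Y Z : C}

def IsVonNeumannRegular (f : X ⟶ Y) : Prop :=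
  ∃ g : Y ⟶ X, f ≫ g ≫ f = f

namespace IsVonNeumannRegular

lemma zero [Preadditive C] : IsVonNeumannRegular (0 : X ⟶ Y) := ⟨0, by simp⟩

lemma comp_of_isSplitEpi_of_isSplitMono (p : X ⟶ Y) (j : Y ⟶ Z) [IsSplitEpi p]
    [IsSplitMono j] : IsVonNeumannRegular (p ≫ j) :=
  ⟨retraction j ≫ section_ p, by simp⟩

lemma of_isSplitEpi (f : X ⟶ Y) [IsSplitEpi f] : IsVonNeumannRegular f :=
  ⟨section_ f, by simp⟩

lemma isSplitEpi {f : X ⟶ Y} [Epi f] (hf : IsVonNeumannRegular f) : IsSplitEpi f := by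
  obtain ⟨g, hg⟩ := hf
  exact IsSplitEpi.mk' ⟨g, by rw [← cancel_epi f, hg, Category.comp_id]⟩

lemma exists_isSplitEpi_comp_isSplitMono [IsIdempotentComplete C] {f : X ⟶ Y}
    (hf : IsVonNeumannRegular f) :
    ∃ (W : C) (p : X ⟶ W) (j : W ⟶ Y), IsSplitEpi p ∧ IsSplitMono j ∧ p ≫ j = f := by
  obtain ⟨g, hg⟩ := hf
  obtain ⟨W, i, p, hip, hpi⟩ :=
    IsIdempotentComplete.idempotents_split X (f ≫ g) (by rw [Category.assoc, reassoc_of% hg])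
  refine ⟨W, p, i ≫ f, IsSplitEpi.mk' ⟨i, hip⟩, IsSplitMono.mk' ⟨g ≫ p, ?_⟩, ?_⟩
  · rw [Category.assoc, ← Category.assoc f, ← hpi, Category.assoc, reassoc_of% hip, hip]
  · rw [reassoc_of% hpi, hg]

end IsVonNeumannRegular

lemma VonNeumannRegular.isVonNeumannRegular (h : VonNeumannRegular C) (f : X ⟶ Y) :
    IsVonNeumannRegular f := by
  obtain ⟨W, p, j, hp, hj, rfl⟩ := h f
  exact .comp_of_isSplitEpi_of_isSplitMono p j

lemma VonNeumannRegular.of_isVonNeumannRegular [IsIdempotentComplete C]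
    (h : ∀ ⦃X Y : C⦄ (f : X ⟶ Y), IsVonNeumannRegular f) : VonNeumannRegular C :=
  fun _ _ f => (h f).exists_isSplitEpi_comp_isSplitMono

end Regular

section WeakExactness

variable {C : Type*} [Category C] [Preadditive C] {X Y Z : C}

-- `IsWeakKernel f g`: `f` is a weak kernel of `g`;
-- `IsWeakCokernel f g`: `g` is a weak cokernel of `f`.
def IsWeakKernel (f : X ⟶ Y) (g : Y ⟶ Z) : Prop :=
  f ≫ g = 0 ∧ ∀ (W : C) (u : W ⟶ Y), u ≫ g = 0 → ∃ v : W ⟶ X, v ≫ f = u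

def IsWeakCokernel (f : X ⟶ Y) (g : Y ⟶ Z) : Prop :=
  f ≫ g = 0 ∧ ∀ (W : C) (u : Y ⟶ W), f ≫ u = 0 → ∃ v : Z ⟶ W, g ≫ v = u

variable {f : X ⟶ Y} {g : Y ⟶ Z}

namespace IsVonNeumannRegular

lemma isWeakKernel (hf : IsVonNeumannRegular f) (hfg : IsWeakCokernel f g) :
    IsWeakKernel f g := by
  obtain ⟨h, hh⟩ := hf
  refine ⟨hfg.1, fun W w hw => ⟨w ≫ h, ?_⟩⟩
  obtain ⟨v, hv⟩ := hfg.2 _ (𝟙 Y - h ≫ f) (by simp [hh])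
  have : w ≫ (𝟙 Y - h ≫ f) = 0 := by rw [← hv, reassoc_of% hw, zero_comp]
  rw [Preadditive.comp_sub, Category.comp_id, sub_eq_zero] at this
  rw [Category.assoc, ← this]

lemma isWeakCokernel (hg : IsVonNeumannRegular g) (hfg : IsWeakKernel f g) :
    IsWeakCokernel f g := by
  obtain ⟨h, hh⟩ := hg
  refine ⟨hfg.1, fun W u hu => ⟨h ≫ u, ?_⟩⟩
  obtain ⟨v, hv⟩ := hfg.2 _ (𝟙 Y - g ≫ h) (by simp [hh])
  have : (𝟙 Y - g ≫ h) ≫ u = 0 := by rw [← hv, Category.assoc, hu, comp_zero]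
  rw [Preadditive.sub_comp, Category.id_comp, sub_eq_zero] at this
  rw [← Category.assoc, ← this]

lemma of_isWeakCokernel_left (hf : IsVonNeumannRegular f) (hfg : IsWeakCokernel f g) :
    IsVonNeumannRegular g := by
  obtain ⟨h, hh⟩ := hf
  obtain ⟨v, hv⟩ := hfg.2 _ (𝟙 Y - h ≫ f) (by simp [hh])
  refine ⟨v, ?_⟩
  rw [reassoc_of% hv]
  simp [hfg.1]

lemma exists_isWeakKernel [IsIdempotentComplete C] (hf : IsVonNeumannRegular f) :
    ∃ (K : C) (ι : K ⟶ X), IsSplitMono ι ∧ IsWeakKernel ι f := by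
  obtain ⟨g, hg⟩ := hf
  obtain ⟨K, ι, ρ, hιρ, hρι⟩ := IsIdempotentComplete.idempotents_split X (𝟙 X - f ≫ g)
    (by simp [reassoc_of% hg])
  have hι : ι = ι ≫ (𝟙 X - f ≫ g) := by rw [← hρι, reassoc_of% hιρ]
  refine ⟨K, ι, IsSplitMono.mk' ⟨ρ, hιρ⟩, ?_, fun W u hu => ⟨u ≫ ρ, ?_⟩⟩
  · rw [hι]
    simp [hg]
  · rw [Category.assoc, hρι]
    simp [reassoc_of% hu]

lemma exists_isWeakCokernel [IsIdempotentComplete C] (hf : IsVonNeumannRegular f) :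
    ∃ (Q : C) (q : Y ⟶ Q), IsSplitEpi q ∧ IsWeakCokernel f q := by
  obtain ⟨g, hg⟩ := hf
  obtain ⟨Q, σ, q, hσq, hqσ⟩ := IsIdempotentComplete.idempotents_split Y (𝟙 Y - g ≫ f)
    (by simp [hg])
  have hq : q = (𝟙 Y - g ≫ f) ≫ q := by rw [← hqσ, Category.assoc, hσq, Category.comp_id]
  refine ⟨Q, q, IsSplitEpi.mk' ⟨σ, hσq⟩, ?_, fun W u hu => ⟨σ ≫ u, ?_⟩⟩
  · rw [hq]
    simp [reassoc_of% hg]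
  · rw [← Category.assoc, hqσ]
    simp [hu]

lemma of_isWeakCokernel_right [IsIdempotentComplete C]
    (hsplit : ∀ ⦃A B : C⦄ (e : A ⟶ B), Epi e → IsSplitEpi e)
    (hg : IsVonNeumannRegular g) (hfg : IsWeakCokernel f g) : IsVonNeumannRegular f := by
  obtain ⟨K, ι, hι, hιg⟩ := hg.exists_isWeakKernel
  obtain ⟨v, rfl⟩ := hιg.2 X f hfg.1
  have : Epi v := Preadditive.epi_of_cancel_zero _ fun {W} u hu => by
    obtain ⟨w, hw⟩ := hfg.2 W (retraction ι ≫ u) (by simp [hu])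
    rw [← IsSplitMono.id_assoc ι u, ← hw, reassoc_of% hιg.1, zero_comp]
  have := hsplit v this
  exact .comp_of_isSplitEpi_of_isSplitMono v ι

end IsVonNeumannRegular

end WeakExactness

variable {C : Type*} [Category C] [Preadditive C]

section Sequences

variable {m : ℕ} (T : ComposableArrows C (m + 1))

lemma isVonNeumannRegular_map'_of_first (hT : ∀ i (h : i + 2 ≤ m + 1), CoYExactAt T i h)
    (h₀ : IsVonNeumannRegular (T.map' 0 1)) {i : ℕ} (hi : i ≤ m) :
    IsVonNeumannRegular (T.map' i (i + 1)) := by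
  induction i with
  | zero => exact h₀
  | succ i ih => exact (ih (by omega)).of_isWeakCokernel_left (hT i (by omega))

lemma isVonNeumannRegular_map'_of_last [IsIdempotentComplete C]
    (hsplit : ∀ ⦃A B : C⦄ (e : A ⟶ B), Epi e → IsSplitEpi e)
    (hT : ∀ i (h : i + 2 ≤ m + 1), CoYExactAt T i h)
    (hlast : IsVonNeumannRegular (T.map' m (m + 1))) {i : ℕ} (hi : i ≤ m) :
    IsVonNeumannRegular (T.map' i (i + 1)) := by
  induction hi using Nat.decreasingInduction with
  | self => exact hlast
  | of_succ i hi ih => exact ih.of_isWeakCokernel_right hsplit (hT i (by omega))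

end Sequences

lemma isNKernelSeq_precomp {n : ℕ} {T : ComposableArrows C (n + 1)} (hT : IsNKernelSeq n T)
    {Z : C} (hZ : IsZero Z) (g : Z ⟶ T.left) : IsNKernelSeq (n + 1) (T.precomp g) := by
  refine ⟨⟨fun _ _ _ => hZ.eq_of_tgt _ _⟩, fun i hi => ?_⟩
  cases i with
  | zero =>
    have := hT.1
    refine ⟨hZ.eq_of_src _ _, fun W u hu => ⟨0, ?_⟩⟩
    have hu0 : u = 0 := (cancel_mono (T.map' 0 1 _ _)).1 (hu.trans zero_comp.symm)
    rw [hu0, zero_comp]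
  | succ i => exact hT.2 i (by omega)

section ZeroObject

variable [HasZeroObject C]

open ZeroObject

lemma HasNKernels.succ {n : ℕ} (h : HasNKernels C n) : HasNKernels C (n + 1) := fun X Y f => by
  obtain ⟨T, hX, hY, hf, hT⟩ := h f
  exact ⟨T.precomp (0 : 0 ⟶ T.left), hX, hY, hf, isNKernelSeq_precomp hT (isZero_zero C) _⟩

lemma HasNKernels.of_le {k n : ℕ} (h : HasNKernels C k) (hkn : k ≤ n) : HasNKernels C n := by
  induction n, hkn using Nat.le_induction with
  | base => exact h
  | succ n _ ih => exact ih.succ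

lemma isSplitEpi_of_hasNKernels_of_axiomA2op {n : ℕ} (hker : HasNKernels C n)
    (hA2op : AxiomA2op C (n + 1)) {X Y : C} (f : X ⟶ Y) [Epi f] : IsSplitEpi f := by
  obtain ⟨T, rfl, rfl, hf, hT⟩ := hker f
  simp only [eqToHom_refl, Category.id_comp, Category.comp_id] at hf
  subst hf
  have : Epi (T.map' n (n + 1)) := ‹_›
  have hT' :=
    hA2op (T.precomp (0 : 0 ⟶ T.left)) this (isNKernelSeq_precomp hT (isZero_zero C) _)
  have hreg : IsVonNeumannRegular (T.map' n (n + 1)) :=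
    isVonNeumannRegular_map'_of_first _ hT'.2.2 .zero (i := n + 1) le_rfl
  exact hreg.isSplitEpi

end ZeroObject

lemma isVonNeumannRegular_of_hasNCokernels [IsIdempotentComplete C]
    (hsplit : ∀ ⦃A B : C⦄ (e : A ⟶ B), Epi e → IsSplitEpi e) {n : ℕ}
    (hcok : HasNCokernels C n) {X Y : C} (f : X ⟶ Y) : IsVonNeumannRegular f := by
  obtain ⟨T, rfl, rfl, hf, hT⟩ := hcok f
  simp only [eqToHom_refl, Category.id_comp, Category.comp_id] at hf
  subst hf
  have hlast : IsVonNeumannRegular (T.map' n (n + 1)) :=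
    have := hsplit _ hT.1
    .of_isSplitEpi _
  exact isVonNeumannRegular_map'_of_last T hsplit hT.2 hlast (Nat.zero_le n)

lemma vonNeumannRegular_of_isNAbelian_of_lt [HasZeroObject C] [IsIdempotentComplete C]
    {k n : ℕ} (hkn : k < n) (hk : IsNAbelian C k) (hn : IsNAbelian C n) :
    VonNeumannRegular C := by
  obtain ⟨n, rfl⟩ : ∃ n', n = n' + 1 := ⟨n - 1, by omega⟩
  have hsplit : ∀ ⦃A B : C⦄ (e : A ⟶ B), Epi e → IsSplitEpi e := fun _ _ e _ =>
    isSplitEpi_of_hasNKernels_of_axiomA2op (hk.1.of_le (by omega)) hn.2.2.2 e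
  exact .of_isVonNeumannRegular fun _ _ f => isVonNeumannRegular_of_hasNCokernels hsplit hk.2.1 f

namespace VonNeumannRegular

lemma axiomA2 (h : VonNeumannRegular C) (n : ℕ) : AxiomA2 C n := fun _ hmono hcok =>
  ⟨⟨hmono, fun _ hi => (h.isVonNeumannRegular _).isWeakKernel (hcok.2 _ hi)⟩, hcok⟩

lemma axiomA2op (h : VonNeumannRegular C) (n : ℕ) : AxiomA2op C n := fun _ hepi hker =>
  ⟨hker, hepi, fun _ hi => (h.isVonNeumannRegular _).isWeakCokernel (hker.2 _ hi)⟩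

variable [IsIdempotentComplete C] [HasZeroObject C]

open ZeroObject

lemma hasNKernels (h : VonNeumannRegular C) {n : ℕ} (hn : 1 ≤ n) : HasNKernels C n := by
  refine HasNKernels.of_le (fun X Y f => ?_) hn
  obtain ⟨K, ι, hι, hιf⟩ := (h.isVonNeumannRegular f).exists_isWeakKernel
  refine ⟨ComposableArrows.mk₂ ι f, rfl, rfl, by
    show f = 𝟙 X ≫ f ≫ 𝟙 Y
    simp, inferInstanceAs (Mono ι), fun i hi => ?_⟩
  obtain rfl : i = 0 := by omega
  exact hιf

lemma hasNCokernels (h : VonNeumannRegular C) {n : ℕ} (hn : 1 ≤ n) : HasNCokernels C n := by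
  intro X Y f
  obtain ⟨Q, q, hq, hfq⟩ := (h.isVonNeumannRegular f).exists_isWeakCokernel
  let O : ℕ → C
    | 0 => X
    | 1 => Y
    | 2 => Q
    | _ + 3 => 0
  let d : ∀ j, O j ⟶ O (j + 1)
    | 0 => f
    | 1 => q
    | _ + 2 => 0
  let T := ComposableArrows.mkOfObjOfMapSucc (fun i : Fin (n + 2) => O i) (fun i => d i)
  have hT (j : ℕ) (hj : j < n + 1) : T.map' j (j + 1) = d j :=
    ComposableArrows.mkOfObjOfMapSucc_map_succ _ _ j hj
  have hd : ∀ j, 1 ≤ j → Epi (d j)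
    | 1, _ => inferInstanceAs (Epi q)
    | k + 2, _ => (isZero_zero C).epi (d (k + 2))
  refine ⟨T, rfl, rfl, ?_, ?_, fun i hi => ?_⟩
  · show _ = 𝟙 X ≫ f ≫ 𝟙 Y
    rw [Category.id_comp, Category.comp_id]
    exact hT 0 (by omega)
  · rw [hT n (by omega)]
    exact hd n hn
  · show IsWeakCokernel (T.map' i (i + 1)) (T.map' (i + 1) (i + 2))
    rw [hT i (by omega), hT (i + 1) (by omega)]
    match i with
    | 0 => exact hfq
    | 1 => exact ⟨comp_zero, fun W u hu =>
        ⟨0, comp_zero.trans ((cancel_epi q).1 (hu.trans comp_zero.symm)).symm⟩⟩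
    | k + 2 => exact ⟨zero_comp, fun W u _ => ⟨0, (isZero_zero C).eq_of_src _ _⟩⟩

end VonNeumannRegular

end Paper

theorem stmt_16_general {C : Type*} [Category C] [Preadditive C] [HasZeroObject C]
    [IsIdempotentComplete C] :
    ((∃ m n : ℕ, 1 ≤ m ∧ 1 ≤ n ∧ m ≠ n ∧ IsNAbelian C m ∧ IsNAbelian C n) →
      VonNeumannRegular C) ∧
    (VonNeumannRegular C → ∀ n : ℕ, 1 ≤ n → IsNAbelian C n) := by
  refine ⟨fun ⟨m, n, _, _, hmn, hm, hn⟩ => ?_,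
    fun h n hn => ⟨h.hasNKernels hn, h.hasNCokernels hn, h.axiomA2 n, h.axiomA2op n⟩⟩
  rcases Nat.lt_or_gt_of_ne hmn with hlt | hlt
  · exact vonNeumannRegular_of_isNAbelian_of_lt hlt hm hn
  · exact vonNeumannRegular_of_isNAbelian_of_lt hlt hn hm

/-- If `C` is `m`-abelian and `n`-abelian for two distinct positive integers `m ≠ n`,
then `C` is von Neumann regular; conversely, a von Neumann regular category is
`n`-abelian for every positive integer `n`. -/
theorem stmt_16 {C : Type*} [Category C] [Preadditive C] [HasZeroObject C]
    [HasFiniteBiproducts C] [IsIdempotentComplete C] :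
    ((∃ m n : ℕ, 1 ≤ m ∧ 1 ≤ n ∧ m ≠ n ∧ IsNAbelian C m ∧ IsNAbelian C n) →
      VonNeumannRegular C) ∧
    (VonNeumannRegular C → ∀ n : ℕ, 1 ≤ n → IsNAbelian C n) :=
  stmt_16_general
end
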